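/- arXiv:1910.13450 — 4 statements merged into one kernel-verified Lean document; each statement's English description precedes it below -/
import Mathlib

section
/- Let x ≥ 2 and y ≥ 1 be integers, and suppose that for each prime p ≤ x an integer a_p is given such that every integer n with 1 ≤ n ≤ y satisfies n ≡ a_p (mod p) for some prime p ≤ x. Then there exists a prime q with q ≤ 2·∏_{p prime, p ≤ x} p such that the interval (q, q + y] contains no prime; in particular there are consecutive primes below 2·∏_{p ≤ x} p + y + x whose difference is greater than y. -/
/-- Chinese remainder over a finset of primes: there is an integer `z` with
`z ≡ -a p (mod p)` for all `p` in the set. -/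
lemma crt_finset_primes (a : ℕ → ℤ) :
    ∀ S : Finset ℕ, (∀ p ∈ S, Nat.Prime p) →
      ∃ z : ℤ, ∀ p ∈ S, (p : ℤ) ∣ (z + a p) := by
  intro S
  induction S using Finset.induction_on with
  | empty => exact fun _ => ⟨0, by simp⟩
  | @insert p S hpS ih =>
    intro hprimes
    obtain ⟨z, hz⟩ := ih (fun q hq => hprimes q (Finset.mem_insert_of_mem hq))
    have hp : Nat.Prime p := hprimes p (Finset.mem_insert_self p S)
    have hcop : IsCoprime (∏ q ∈ S, (q : ℤ)) (p : ℤ) := by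
      apply IsCoprime.prod_left
      intro q hq
      have hq' : Nat.Prime q := hprimes q (Finset.mem_insert_of_mem hq)
      have hne : q ≠ p := fun h => hpS (h ▸ hq)
      rw [Int.isCoprime_iff_gcd_eq_one, Int.gcd_natCast_natCast]
      exact (Nat.coprime_primes hq' hp).mpr hne
    obtain ⟨u, v, huv⟩ := hcop
    refine ⟨z - (∏ q ∈ S, (q : ℤ)) * u * (z + a p), ?_⟩
    intro r hr
    rcases Finset.mem_insert.mp hr with rfl | hr
    · have e : z - (∏ q ∈ S, (q : ℤ)) * u * (z + a r) + a r = (z + a r) * v * r := by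
        linear_combination -(z + a r) * huv
      rw [e]
      exact Dvd.intro_left _ rfl
    · have h1 : (r : ℤ) ∣ z + a r := hz r hr
      have h2 : (r : ℤ) ∣ (∏ q ∈ S, (q : ℤ)) := Finset.dvd_prod_of_mem _ hr
      have e : z - (∏ q ∈ S, (q : ℤ)) * u * (z + a p) + a r =
          (z + a r) - (∏ q ∈ S, (q : ℤ)) * (u * (z + a p)) := by ring
      rw [e]
      exact dvd_sub h1 (h2.mul_right _)

/-- If `(M, M+y]` consists of composite numbers (with suitable size bounds),
we get the prime-gap conclusions. -/
lemma gap_of_composite_run (x y P M : ℕ) (hx : 2 ≤ x) (hy : 1 ≤ y)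
    (hM2 : 2 ≤ M) (hMP : M ≤ 2 * P) (h2M : 2 * M ≤ 2 * P + y + x)
    (hcomp : ∀ n : ℕ, 1 ≤ n → n ≤ y → ¬ (M + n).Prime) :
    (∃ q : ℕ, q.Prime ∧ q ≤ 2 * P ∧ ∀ r : ℕ, q < r → r ≤ q + y → ¬ r.Prime) ∧
      ∃ n : ℕ, Nat.nth Nat.Prime (n + 1) < 2 * P + y + x ∧
        y < Nat.nth Nat.Prime (n + 1) - Nat.nth Nat.Prime n := by
  have hinf := Nat.infinite_setOf_prime
  set c := Nat.count Nat.Prime (M + 1) with hc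
  have hc1 : 1 ≤ c := by
    have h3 : Nat.count Nat.Prime 3 ≤ c := Nat.count_monotone _ (by omega)
    have : Nat.count Nat.Prime 3 = 1 := by
      simp [Nat.count_succ, Nat.count_zero, Nat.prime_two, Nat.not_prime_one,
        Nat.not_prime_zero]
    omega
  set q := Nat.nth Nat.Prime (c - 1) with hq
  set q' := Nat.nth Nat.Prime c with hq'
  have hqprime : q.Prime := Nat.nth_mem_of_infinite hinf _
  have hq'prime : q'.Prime := Nat.nth_mem_of_infinite hinf _
  have hqM : q ≤ M := by
    have := Nat.nth_lt_of_lt_count (show c - 1 < Nat.count Nat.Prime (M + 1) by omega)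
    omega
  have hmax : ∀ r : ℕ, r.Prime → r ≤ M → r ≤ q := by
    intro r hr hrM
    have h1 : Nat.count Nat.Prime r + 1 ≤ c := by
      have h2 : Nat.count Nat.Prime (r + 1) ≤ c := Nat.count_monotone _ (by omega)
      rwa [Nat.count_succ, if_pos hr] at h2
    have h3 : Nat.nth Nat.Prime (Nat.count Nat.Prime r) ≤ Nat.nth Nat.Prime (c - 1) :=
      (Nat.nth_le_nth hinf).mpr (by omega)
    rwa [Nat.nth_count hr] at h3
  have hmin : ∀ r : ℕ, r.Prime → q < r → q' ≤ r := by
    intro r hr hqr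
    have h1 : q < Nat.nth Nat.Prime (Nat.count Nat.Prime r) := by
      rwa [Nat.nth_count hr]
    have h2 : c - 1 < Nat.count Nat.Prime r := (Nat.nth_lt_nth hinf).mp h1
    have h3 : Nat.nth Nat.Prime c ≤ Nat.nth Nat.Prime (Nat.count Nat.Prime r) :=
      (Nat.nth_le_nth hinf).mpr (by omega)
    rwa [Nat.nth_count hr] at h3
  have hqq' : q < q' := (Nat.nth_lt_nth hinf).mpr (by omega)
  have hq'My : M + y < q' := by
    by_contra h
    push_neg at h
    rcases le_or_gt q' M with h1 | h1
    · exact absurd (hmax q' hq'prime h1) (by omega)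
    · have := hcomp (q' - M) (by omega) (by omega)
      rw [Nat.add_sub_cancel' (le_of_lt h1)] at this
      exact this hq'prime
  obtain ⟨r0, hr0p, hr0M, hr02M⟩ := Nat.exists_prime_lt_and_le_two_mul M (by omega)
  have hq'2M : q' ≤ 2 * M := le_trans (hmin r0 hr0p (by omega)) hr02M
  have hq'ne : q' ≠ 2 * M := by
    intro h
    have h2 : (2 : ℕ) ∣ q' := ⟨M, h⟩
    rcases hq'prime.eq_one_or_self_of_dvd 2 h2 with h3 | h3 <;> omega
  have hq'lt : q' < 2 * P + y + x := by omega
  constructor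
  · refine ⟨q, hqprime, by omega, ?_⟩
    intro r h1 h2 hrp
    have := hmin r hrp h1
    omega
  · refine ⟨c - 1, ?_, ?_⟩
    · have hn1 : c - 1 + 1 = c := by omega
      rw [hn1]
      exact hq'lt
    · have hn1 : c - 1 + 1 = c := by omega
      rw [hn1]
      omega

/-- **From coverings to prime gaps.** If, for each prime `p ≤ x`, a residue class
`a_p (mod p)` is chosen so that every `n ∈ {1, …, y}` lies in some chosen class, then
there is a prime `q ≤ 2·∏_{p ≤ x} p` such that `(q, q + y]` contains no prime; in
particular there are consecutive primes below `2·∏_{p ≤ x} p + y + x` whose difference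
exceeds `y`. -/
theorem covering_implies_prime_gap (x y : ℕ) (hx : 2 ≤ x) (hy : 1 ≤ y)
    (a : ℕ → ℤ)
    (hcover : ∀ n : ℕ, 1 ≤ n → n ≤ y →
      ∃ p : ℕ, p.Prime ∧ p ≤ x ∧ (n : ℤ) ≡ a p [ZMOD (p : ℤ)]) :
    (∃ q : ℕ, q.Prime ∧
        q ≤ 2 * ∏ p ∈ (Finset.range (x + 1)).filter Nat.Prime, p ∧
        ∀ r : ℕ, q < r → r ≤ q + y → ¬ r.Prime) ∧
      ∃ n : ℕ,
        Nat.nth Nat.Prime (n + 1) <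
          2 * (∏ p ∈ (Finset.range (x + 1)).filter Nat.Prime, p) + y + x ∧
        y < Nat.nth Nat.Prime (n + 1) - Nat.nth Nat.Prime n := by
  set S := (Finset.range (x + 1)).filter Nat.Prime with hS
  set P := ∏ p ∈ S, p with hP
  have hSprime : ∀ p ∈ S, Nat.Prime p := fun p hp => (Finset.mem_filter.mp hp).2
  have hmemS : ∀ p : ℕ, p.Prime → p ≤ x → p ∈ S := fun p hp hpx =>
    Finset.mem_filter.mpr ⟨Finset.mem_range.mpr (by omega), hp⟩
  have hPpos : 0 < P := Finset.prod_pos (fun p hp => (hSprime p hp).pos)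
  have h2S : (2 : ℕ) ∈ S := hmemS 2 Nat.prime_two hx
  have h2P : 2 ∣ P := Finset.dvd_prod_of_mem _ h2S
  have hP2 : 2 ≤ P := Nat.le_of_dvd hPpos h2P
  -- `x ≤ P`
  have hxP : x ≤ P := by
    obtain ⟨p, hp, hp1, hp2⟩ := Nat.exists_prime_lt_and_le_two_mul (x / 2) (by omega)
    have hpx : p ≤ x := le_trans hp2 (by omega)
    have hpS : p ∈ S := hmemS p hp hpx
    rcases eq_or_ne p 2 with rfl | hne
    · -- then x ≤ 3
      rcases (by omega : x = 2 ∨ x = 3) with rfl | rfl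
      · omega
      · have h3 : (3 : ℕ) ∈ S := hmemS 3 Nat.prime_three (by omega)
        have := Nat.le_of_dvd hPpos (Finset.dvd_prod_of_mem _ h3)
        omega
    · have hsub : ({2, p} : Finset ℕ) ⊆ S := by
        intro q hq
        rcases Finset.mem_insert.mp hq with rfl | hq
        · exact h2S
        · rw [Finset.mem_singleton.mp hq]; exact hpS
      have hdvd : (∏ q ∈ ({2, p} : Finset ℕ), q) ∣ P :=
        Finset.prod_dvd_prod_of_subset _ _ _ hsub
      rw [Finset.prod_pair (Ne.symm hne)] at hdvd
      have := Nat.le_of_dvd hPpos hdvd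
      omega
  -- CRT solution
  obtain ⟨z, hz⟩ := crt_finset_primes a S hSprime
  have hPz : (0 : ℤ) < (P : ℤ) := by exact_mod_cast hPpos
  set w : ℤ := z % (P : ℤ) with hw
  have hw0 : 0 ≤ w := Int.emod_nonneg z (by positivity)
  have hwP : w < (P : ℤ) := Int.emod_lt_of_pos z hPz
  have hzw : (P : ℤ) ∣ z - w := by
    rw [hw, Int.emod_def]
    exact ⟨z / (P : ℤ), by ring⟩
  set m0 : ℕ := if w = 0 then P else w.toNat with hm0
  have hm01 : 1 ≤ m0 := by
    by_cases h : w = 0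
    · simp [hm0, h]; omega
    · simp [hm0, h]
      omega
  have hm0P : m0 ≤ P := by
    by_cases h : w = 0
    · simp [hm0, h]
    · simp [hm0, h]
      omega
  have hm0w : (P : ℤ) ∣ (m0 : ℤ) - w := by
    by_cases h : w = 0
    · simp [hm0, h]
    · simp [hm0, h, Int.toNat_of_nonneg hw0]
  have hm0cong : ∀ p ∈ S, (p : ℤ) ∣ ((m0 : ℤ) + a p) := by
    intro p hpS
    have hpP : (p : ℤ) ∣ (P : ℤ) := Int.natCast_dvd_natCast.mpr (Finset.dvd_prod_of_mem _ hpS)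
    have e : (m0 : ℤ) + a p = ((m0 : ℤ) - w) + (-(z - w)) + (z + a p) := by ring
    rw [e]
    exact dvd_add (dvd_add (hpP.trans hm0w) ((hpP.trans hzw).neg_right)) (hz p hpS)
  -- divisor of m0 + n for covered n
  have hdvd : ∀ n : ℕ, 1 ≤ n → n ≤ y → ∃ p : ℕ, p.Prime ∧ p ≤ x ∧ p ∣ (m0 + n) := by
    intro n h1 h2
    obtain ⟨p, hp, hpx, hmod⟩ := hcover n h1 h2
    have h3 : (p : ℤ) ∣ a p - (n : ℤ) := Int.ModEq.dvd hmod
    have h4 := hm0cong p (hmemS p hp hpx)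
    have h5 : (p : ℤ) ∣ ((m0 : ℤ) + n) := by
      have e : (m0 : ℤ) + n = ((m0 : ℤ) + a p) - (a p - n) := by ring
      rw [e]
      exact dvd_sub h4 h3
    refine ⟨p, hp, hpx, ?_⟩
    exact_mod_cast h5
  rcases le_or_gt x y with hxy | hxy
  · -- case x ≤ y
    rcases le_or_gt (2 * m0) (x + y) with hm | hm
    · -- M = m0 + P
      apply gap_of_composite_run x y P (m0 + P) hx hy (by omega) (by omega) (by omega)
      intro n h1 h2 hpr
      obtain ⟨p, hp, hpx, hpd⟩ := hdvd n h1 h2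
      have hpP : p ∣ P := Finset.dvd_prod_of_mem _ (hmemS p hp hpx)
      have hptot : p ∣ m0 + P + n := by
        have e : m0 + P + n = (m0 + n) + P := by ring
        rw [e]; exact dvd_add hpd hpP
      rcases hpr.eq_one_or_self_of_dvd p hptot with h | h
      · exact hp.one_lt.ne' h
      · omega
    · -- M = m0
      have hxm0 : x < m0 := by omega
      apply gap_of_composite_run x y P m0 hx hy (by omega) (by omega) (by omega)
      intro n h1 h2 hpr
      obtain ⟨p, hp, hpx, hpd⟩ := hdvd n h1 h2
      rcases hpr.eq_one_or_self_of_dvd p hpd with h | h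
      · exact hp.one_lt.ne' h
      · omega
  · -- case y < x : pure primorial construction, M = P + 1
    apply gap_of_composite_run x y P (P + 1) hx hy (by omega) (by omega) (by omega)
    intro n h1 h2 hpr
    have hn2 : 2 ≤ n + 1 := by omega
    set p := (n + 1).minFac with hpdef
    have hp : p.Prime := Nat.minFac_prime (by omega)
    have hpn : p ∣ n + 1 := Nat.minFac_dvd _
    have hpx : p ≤ x := le_trans (Nat.le_of_dvd (by omega) hpn) (by omega)
    have hpP : p ∣ P := Finset.dvd_prod_of_mem _ (hmemS p hp hpx)
    have hptot : p ∣ P + 1 + n := by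
      have e : P + 1 + n = P + (n + 1) := by ring
      rw [e]; exact dvd_add hpP hpn
    rcases hpr.eq_one_or_self_of_dvd p hptot with h | h
    · exact hp.one_lt.ne' h
    · omega
end

section
/- The set H = {0, 2, 6, 12, 20, 26, 30, 32, 42, 56, 60, 62, 72, 74, 84, 86, 90, 96, 104, 110, 114, 116, 120, 126, 132, 134, 140, 144, 152, 156, 162, 170, 174, 176, 182, 186, 194, 200, 204, 210, 216, 222, 224, 230, 236, 240, 242, 246, 252, 254, 260, 264, 266, 270} of 54 integers is admissible: for every prime p there exists an integer n such that the product ∏_{h ∈ H} (n + h) is not divisible by p. -/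
/-!
A set of fewer than `p` integers misses some residue class `-n` modulo `p`, and then no factor
`n + h` is divisible by `p`; since `H54` has 54 elements this settles every prime `p > 54`.
The sixteen primes below 55 are checked by computation.
-/

/-- The 54-element tuple used to produce prime gaps of size at most 270. -/
def H54 : Finset ℤ :=
  {0, 2, 6, 12, 20, 26, 30, 32, 42, 56, 60, 62, 72, 74, 84, 86, 90, 96,
   104, 110, 114, 116, 120, 126, 132, 134, 140, 144, 152, 156,
   162, 170, 174, 176, 182, 186, 194, 200, 204, 210, 216, 222,
   224, 230, 236, 240, 242, 246, 252, 254, 260, 264, 266, 270}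

theorem Int.exists_forall_not_dvd_add_of_card_lt {H : Finset ℤ} {m : ℕ} (hm : H.card < m) :
    ∃ n : ℤ, ∀ h ∈ H, ¬ (m : ℤ) ∣ n + h := by
  have : NeZero m := ⟨by omega⟩
  have hlt : (H.image fun h : ℤ => -(h : ZMod m)).card < (Finset.univ : Finset (ZMod m)).card := by
    rw [Finset.card_univ, ZMod.card]
    exact Finset.card_image_le.trans_lt hm
  obtain ⟨r, -, hr⟩ := Finset.exists_mem_notMem_of_card_lt_card hlt
  obtain ⟨n, rfl⟩ := ZMod.intCast_surjective r
  refine ⟨n, fun h hh hdvd => hr (Finset.mem_image.mpr ⟨h, hh, ?_⟩)⟩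
  rw [← ZMod.intCast_zmod_eq_zero_iff_dvd, Int.cast_add] at hdvd
  exact (eq_neg_of_add_eq_zero_left hdvd).symm

theorem Int.not_dvd_prod_add_of_forall_not_dvd {H : Finset ℤ} {p : ℕ} (hp : p.Prime) {n : ℤ}
    (hn : ∀ h ∈ H, ¬ (p : ℤ) ∣ n + h) : ¬ (p : ℤ) ∣ ∏ h ∈ H, (n + h) := fun hdvd => by
  obtain ⟨h, hh, hdvd_h⟩ := (Nat.prime_iff_prime_int.mp hp).exists_mem_finset_dvd hdvd
  exact hn h hh hdvd_h

set_option maxRecDepth 10000 in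
theorem H54_card : H54.card = 54 := by
  rfl

set_option maxRecDepth 10000 in
theorem H54_exists_forall_not_dvd_add_of_lt_55 :
    ∀ p : ℕ, p < 55 → p.Prime → ∃ n : ℕ, n < p ∧ ∀ h ∈ H54, ¬ (p : ℤ) ∣ n + h := by
  decide

/-- The set `H54` of 54 integers is admissible: for every prime `p` there is an
integer `n` such that `∏_{h ∈ H54} (n + h)` is not divisible by `p`. -/
theorem H54_admissible :
    H54.card = 54 ∧
      ∀ p : ℕ, p.Prime → ∃ n : ℤ, ¬ (p : ℤ) ∣ ∏ h ∈ H54, (n + h) := by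
  refine ⟨H54_card, fun p hp => ?_⟩
  obtain ⟨n, hn⟩ : ∃ n : ℤ, ∀ h ∈ H54, ¬ (p : ℤ) ∣ n + h := by
    rcases lt_or_ge p 55 with hsmall | hlarge
    · obtain ⟨n, -, hn⟩ := H54_exists_forall_not_dvd_add_of_lt_55 p hsmall hp
      exact ⟨n, hn⟩
    · exact Int.exists_forall_not_dvd_add_of_card_lt (by rw [H54_card]; omega)
  exact ⟨n, Int.not_dvd_prod_add_of_forall_not_dvd hp hn⟩
end

section
/- For every constant C > 0 there are infinitely many n such that p_{n+1} − p_n > C·log p_n; equivalently, limsup_{n→∞} (p_{n+1} − p_n)/log p_n = ∞. -/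
/-!
It suffices to cover `[1, y]` by residue classes `-a p mod p`, `p` ranging over a set `U` of
primes with `∑_{p ∈ U} log p ≤ ε y`: the Chinese remainder theorem then yields `m` with
`log m ≤ ε y + O(1)` such that each of `m + 1, …, m + y` has a proper prime divisor in `U`.

To build the covering, fix `K` of order `1/ε` and a finite set `G` of primes `> K` with
`∏_{p ∈ G} (1 - 1/p)` small (the sum of `1/p` over primes diverges). The class `0` for every prime
`p ≤ y/K` outside `G` costs at most `θ(y/K) ≤ log 4 · y/K`, and leaves only primes and `G`-smooth
numbers, `O(y / log y)` in all. Classes for the primes of `G`, chosen greedily, keep only a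
proportion `∏_{p ∈ G} (1 - 1/p)` of these, and each remaining one gets a prime of its own in
`(y, y²]`, of cost `2 log y`.
-/

open Filter Finset Real
open scoped Nat.Prime

namespace Westzynthius

def survivors (U : Finset ℕ) (a : ℕ → ℕ) (S : Finset ℕ) : Finset ℕ :=
  {s ∈ S | ∀ p ∈ U, ¬ p ∣ a p + s}

lemma survivors_union {U V : Finset ℕ} (h : Disjoint U V) (a b : ℕ → ℕ) (S : Finset ℕ) :
    survivors (U ∪ V) (U.piecewise a b) S = survivors V b (survivors U a S) := by
  ext s
  simp only [survivors, mem_filter, forall_mem_union, and_assoc]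
  refine and_congr_right fun _ ↦ and_congr
    (forall₂_congr fun p hp ↦ by rw [piecewise_eq_of_mem _ _ _ hp])
    (forall₂_congr fun p hp ↦ by
      rw [piecewise_eq_of_notMem _ _ _ (disjoint_right.mp h hp)])

lemma one_sub_one_div_natCast_nonneg {p : ℕ} (hp : 0 < p) : (0 : ℝ) ≤ 1 - 1 / p :=
  sub_nonneg.mpr (div_le_one_of_le₀ (by exact_mod_cast hp) (Nat.cast_nonneg p))

lemma dvd_sub_mod_add {q s : ℕ} (hq : 0 < q) : q ∣ q - s % q + s := by
  refine ⟨s / q + 1, ?_⟩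
  have h1 := Nat.div_add_mod s q
  have h2 := Nat.mod_lt s hq
  rw [mul_add, mul_one]
  generalize q * (s / q) = t at *
  omega

lemma exists_card_survivors_singleton_le {q : ℕ} (hq : 0 < q) (T : Finset ℕ) :
    ∃ v, (#(survivors {q} (fun _ ↦ v) T) : ℝ) ≤ (1 - 1 / q) * #T := by
  have hmaps : ∀ s ∈ T, s % q ∈ range q := fun s _ ↦ mem_range.mpr (Nat.mod_lt s hq)
  obtain ⟨r, -, hr⟩ := exists_le_card_fiber_of_nsmul_le_card_of_maps_to hmaps
    (nonempty_range_iff.mpr hq.ne') (b := (#T / q : ℝ)) (by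
      rw [card_range, nsmul_eq_mul]; field_simp; rfl)
  refine ⟨q - r, ?_⟩
  have hsub : survivors {q} (fun _ ↦ q - r) T ⊆ {s ∈ T | ¬ s % q = r} := by
    intro s hs
    simp only [survivors, mem_filter, forall_eq, mem_singleton] at hs ⊢
    exact ⟨hs.1, fun h ↦ hs.2 (h ▸ dvd_sub_mod_add hq)⟩
  have hle : (#(survivors {q} (fun _ ↦ q - r) T) : ℝ) ≤ #{s ∈ T | ¬ s % q = r} := by
    exact_mod_cast card_le_card hsub
  have hsplit : (#{s ∈ T | s % q = r} : ℝ) + #{s ∈ T | ¬ s % q = r} = #T := by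
    exact_mod_cast card_filter_add_card_filter_not (s := T) (fun s ↦ s % q = r)
  have : (1 - 1 / q : ℝ) * #T = #T - #T / q := by ring
  linarith

lemma exists_card_survivors_le (G : Finset ℕ) (hG : ∀ p ∈ G, 0 < p) (S : Finset ℕ) :
    ∃ c : ℕ → ℕ, (#(survivors G c S) : ℝ) ≤ (∏ p ∈ G, (1 - 1 / (p : ℝ))) * #S := by
  induction G using Finset.induction_on with
  | empty => exact ⟨0, by simp [survivors]⟩
  | @insert q G hq ih =>
    obtain ⟨c, hc⟩ := ih fun p hp ↦ hG p (mem_insert_of_mem hp)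
    obtain ⟨v, hv⟩ := exists_card_survivors_singleton_le (hG q (mem_insert_self q G))
      (survivors G c S)
    refine ⟨G.piecewise c fun _ ↦ v, ?_⟩
    rw [insert_eq, union_comm, survivors_union (disjoint_singleton_right.mpr hq),
      prod_union (disjoint_singleton_right.mpr hq), prod_singleton]
    have := one_sub_one_div_natCast_nonneg (hG q (mem_insert_self q G))
    calc _ ≤ (1 - 1 / (q : ℝ)) * #(survivors G c S) := hv
      _ ≤ (1 - 1 / (q : ℝ)) * ((∏ p ∈ G, (1 - 1 / (p : ℝ))) * #S) := by gcongr
      _ = _ := by ring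

lemma exists_survivors_eq_empty {T R : Finset ℕ} (hTR : ∀ s ∈ T, ∀ r ∈ R, s ≤ r)
    (hcard : #T = #R) : ∃ a, survivors R a T = ∅ := by
  let e := equivOfCardEq hcard
  refine ⟨fun r ↦ if h : r ∈ R then r - e.symm ⟨r, h⟩ else 0, ?_⟩
  refine filter_eq_empty_iff.mpr fun s hs hsurv ↦ hsurv _ (e ⟨s, hs⟩).2 ?_
  dsimp only
  rw [dif_pos (e ⟨s, hs⟩).2, Subtype.coe_eta, Equiv.symm_apply_apply,
    Nat.sub_add_cancel (hTR s hs _ (e ⟨s, hs⟩).2)]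

lemma prime_or_mem_factoredNumbers {G : Finset ℕ} {K B s : ℕ} (hGK : ∀ p ∈ G, K < p)
    (hKB : K ≤ B) (hs0 : s ≠ 0) (hs : s < K * (B + 1))
    (hcop : ∀ p, p.Prime → p ≤ B → p ∉ G → ¬ p ∣ s) :
    s.Prime ∨ s ∈ Nat.factoredNumbers G := by
  by_cases hbig : ∃ q, q.Prime ∧ q ∣ s ∧ B < q
  · obtain ⟨q, hq, ⟨t, rfl⟩, hBq⟩ := hbig
    rcases eq_or_ne t 1 with rfl | ht1
    · exact Or.inl (by rwa [mul_one])
    have htK : t < K := by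
      have : t * (B + 1) < K * (B + 1) :=
        (Nat.mul_le_mul_left t hBq).trans_lt (by rw [mul_comm]; exact hs)
      exact Nat.lt_of_mul_lt_mul_right this
    have hmin := Nat.minFac_le (Nat.pos_of_ne_zero (right_ne_zero_of_mul hs0))
    exact absurd (dvd_mul_of_dvd_right (Nat.minFac_dvd t) q)
      (hcop _ (Nat.minFac_prime ht1) (by omega) fun hG ↦ by have := hGK _ hG; omega)
  · push Not at hbig
    refine Or.inr (Nat.mem_factoredNumbers'.mpr fun p hp hps ↦ ?_)
    by_contra hpG
    exact hcop p hp (hbig p hp hps) hpG hps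

lemma exists_primes_gt_le_sum_one_div (K : ℕ) (T : ℝ) :
    ∃ G : Finset ℕ, (∀ p ∈ G, p.Prime ∧ K < p) ∧ T ≤ ∑ p ∈ G, (1 / p : ℝ) := by
  set f := Set.indicator {p : ℕ | p.Prime} (fun n : ℕ ↦ (1 : ℝ) / n)
  have hdiv : Tendsto (fun N ↦ ∑ k ∈ range N, f (k + (K + 1))) atTop atTop := by
    refine (not_summable_iff_tendsto_nat_atTop_of_nonneg fun n ↦
      Set.indicator_nonneg (fun _ _ ↦ by positivity) _).mp ?_
    rw [summable_nat_add_iff]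
    exact not_summable_one_div_on_primes
  obtain ⟨N, hN⟩ := (hdiv.eventually_ge_atTop T).exists
  refine ⟨{p ∈ Ico (K + 1) (N + (K + 1)) | p.Prime}, fun p hp ↦ ?_, hN.trans_eq ?_⟩
  · simp only [mem_filter, mem_Ico] at hp
    exact ⟨hp.2, by omega⟩
  · rw [sum_filter, sum_Ico_eq_sum_range, Nat.add_sub_cancel]
    refine sum_congr rfl fun k _ ↦ ?_
    simp only [f, Set.indicator_apply, Set.mem_ofPred_eq, add_comm k]

lemma exists_primes_gt_prod_one_sub_one_div_le (K : ℕ) {δ : ℝ} (hδ : 0 < δ) :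
    ∃ G : Finset ℕ, (∀ p ∈ G, p.Prime ∧ K < p) ∧ ∏ p ∈ G, (1 - 1 / (p : ℝ)) ≤ δ := by
  obtain ⟨G, hG, hsum⟩ := exists_primes_gt_le_sum_one_div K (-log δ)
  refine ⟨G, hG, ?_⟩
  calc ∏ p ∈ G, (1 - 1 / (p : ℝ)) ≤ ∏ p ∈ G, exp (-(1 / p)) :=
        prod_le_prod (fun p hp ↦ one_sub_one_div_natCast_nonneg (hG p hp).1.pos)
          fun p _ ↦ one_sub_le_exp_neg _
    _ = exp (-∑ p ∈ G, (1 / p : ℝ)) := by rw [← exp_sum, sum_neg_distrib]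
    _ ≤ exp (log δ) := exp_le_exp.mpr (by linarith)
    _ = δ := exp_log hδ

lemma exists_nth_prime_le_lt_of_not_prime {m y : ℕ} (hm : 2 ≤ m)
    (h : ∀ s ∈ Icc 1 y, ¬ (m + s).Prime) :
    ∃ n, Nat.nth Nat.Prime n ≤ m ∧ m + y < Nat.nth Nat.Prime (n + 1) := by
  obtain ⟨n, hn⟩ : ∃ n, Nat.count Nat.Prime (m + 1) = n + 1 := Nat.exists_eq_succ_of_ne_zero
    (by rw [Ne, Nat.count_eq_zero ⟨2, Nat.prime_two⟩, Nat.nth_prime_zero_eq_two]; omega)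
  refine ⟨n, Nat.lt_add_one_iff.mp (Nat.nth_lt_of_lt_count (by omega)), ?_⟩
  have hle : m + 1 ≤ Nat.nth Nat.Prime (n + 1) :=
    hn ▸ Nat.le_nth_count Nat.infinite_setOfPred_prime (m + 1)
  by_contra! hlt
  exact h (Nat.nth Nat.Prime (n + 1) - m) (mem_Icc.mpr ⟨by omega, by omega⟩)
    (by rw [Nat.add_sub_cancel' (by omega)]; exact Nat.prime_nth_prime _)

lemma eventually_primeCounting_mul_log_le :
    ∀ᶠ y : ℕ in atTop, (π y : ℝ) * log y ≤ 3 * y := by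
  have hlog4 : log 4 < 3 := by
    linarith [log_lt_sub_one_of_pos (x := 4) (by norm_num) (by norm_num)]
  filter_upwards [tendsto_natCast_atTop_atTop.eventually
    (Chebyshev.eventually_primeCounting_le (ε := 3 - log 4) (by linarith)),
    eventually_ge_atTop 2] with y hy hy2
  rw [Nat.floor_natCast, add_sub_cancel] at hy
  have hlog : 0 < log (y : ℝ) := log_pos (by exact_mod_cast hy2)
  rwa [le_div_iff₀ hlog] at hy

lemma isLittleO_sqrt_mul_log : (fun x : ℝ ↦ √x * log x) =o[atTop] id := by
  refine ((Asymptotics.isBigO_refl (fun x : ℝ ↦ √x) atTop).mul_isLittleO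
    (isLittleO_log_rpow_atTop (r := 1 / 2) (by norm_num))).congr' EventuallyEq.rfl ?_
  filter_upwards [eventually_ge_atTop 0] with x hx
  rw [← sqrt_eq_rpow, mul_self_sqrt hx, id]

lemma eventually_const_mul_sqrt_mul_log_le (A : ℝ) :
    ∀ᶠ y : ℕ in atTop, A * √y * log y ≤ y := by
  have h := (isLittleO_sqrt_mul_log.const_mul_left A).bound one_pos
  filter_upwards [tendsto_natCast_atTop_atTop.eventually h] with y hy
  rw [one_mul, id, norm_of_nonneg (Nat.cast_nonneg' y), ← mul_assoc] at hy
  exact (le_abs_self _).trans hy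

lemma eventually_two_mul_sqrt_le_primeCounting :
    ∀ᶠ n : ℕ in atTop, 2 * √n ≤ π n := by
  filter_upwards [eventually_const_mul_sqrt_mul_log_le (3 / log 2), eventually_ge_atTop 4]
    with n hn hn4
  have hn4' : (4 : ℝ) ≤ n := by exact_mod_cast hn4
  have hlog : 0 < log (n : ℝ) := log_pos (by linarith)
  have hsqrt : 2 ≤ √(n : ℝ) := by
    rw [show (2 : ℝ) = √4 by rw [show (4 : ℝ) = 2 ^ 2 by norm_num, sqrt_sq zero_le_two]]
    exact sqrt_le_sqrt hn4'
  have hlog_succ : log (n + 1 : ℝ) ≤ √n * log n := by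
    calc log (n + 1 : ℝ) ≤ log ((n : ℝ) ^ 2) := log_le_log (by linarith) (by nlinarith)
      _ = 2 * log n := by rw [log_pow]; norm_num
      _ ≤ √n * log n := by gcongr
  have hlog2 : 0 < log (2 : ℝ) := log_pos one_lt_two
  have hn' : 3 * (√n * log n) ≤ n * log 2 := by
    rw [div_mul_eq_mul_div, div_mul_eq_mul_div, div_le_iff₀ hlog2] at hn
    linarith
  refine le_trans ?_ (Chebyshev.pi_ge n)
  rw [le_div_iff₀ hlog]
  linarith

lemma eventually_two_mul_le_primeCounting_sq :
    ∀ᶠ y : ℕ in atTop, 2 * y ≤ π (y ^ 2) := by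
  filter_upwards [(tendsto_pow_atTop two_ne_zero).eventually
    eventually_two_mul_sqrt_le_primeCounting] with y hy
  rw [Nat.cast_pow, sqrt_sq (Nat.cast_nonneg y)] at hy
  exact_mod_cast hy

lemma card_survivors_primesLE_sdiff_le {G : Finset ℕ} {K y : ℕ} (hGK : ∀ p ∈ G, K < p)
    (hK : 0 < K) (hKy : K * K ≤ y) :
    #(survivors (Nat.primesLE (y / K) \ G) 0 (Icc 1 y)) ≤
      π y + 2 ^ #(G.sup id + 1).primesBelow * y.sqrt := by
  refine (card_le_card (t := Nat.primesLE y ∪ Nat.smoothNumbersUpTo y (G.sup id + 1))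
    fun s hs ↦ ?_).trans ((card_union_le _ _).trans (add_le_add
      (Nat.primesLE_card_eq_primeCounting y).le (Nat.smoothNumbersUpTo_card_le _ _)))
  rw [survivors, mem_filter, mem_Icc] at hs
  obtain ⟨⟨hs1, hsy⟩, hcop⟩ := hs
  rcases prime_or_mem_factoredNumbers hGK ((Nat.le_div_iff_mul_le hK).mpr hKy) (by omega)
    (hsy.trans_lt (Nat.lt_mul_div_succ y hK)) (fun p hp hpB hpG ↦ by
      simpa using hcop p (mem_sdiff.mpr ⟨Nat.mem_primesLE.mpr ⟨hpB, hp⟩, hpG⟩)) with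
    h | h
  · exact mem_union_left _ (Nat.mem_primesLE.mpr ⟨hsy, h⟩)
  · refine mem_union_right _ (Nat.mem_smoothNumbersUpTo.mpr ⟨hsy, ?_⟩)
    rw [Nat.smoothNumbers_eq_factoredNumbers]
    exact Nat.factoredNumbers_mono (fun p hp ↦ mem_range.mpr
      (Nat.lt_add_one_iff.mpr (le_sup (f := id) hp))) h

lemma exists_primes_between_card_eq {y t : ℕ} (ht : t ≤ y) (hπ : 2 * y ≤ π (y ^ 2)) :
    ∃ R : Finset ℕ, #R = t ∧ ∀ r ∈ R, r.Prime ∧ y < r ∧ r ≤ y ^ 2 := by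
  have hπy : π y ≤ y := by
    rw [← Nat.primesLE_card_eq_primeCounting, Nat.primesLE_eq_filter_Icc_one]
    exact (card_filter_le _ _).trans (by simp)
  have hsub : Nat.primesLE y ⊆ Nat.primesLE (y ^ 2) :=
    Nat.primesLE_mono (Nat.le_self_pow two_ne_zero y)
  obtain ⟨R, hR, hcard⟩ := exists_subset_card_eq (s := Nat.primesLE (y ^ 2) \ Nat.primesLE y)
    (n := t) (by
      rw [card_sdiff_of_subset hsub, Nat.primesLE_card_eq_primeCounting,
        Nat.primesLE_card_eq_primeCounting]
      omega)
  refine ⟨R, hcard, fun r hr ↦ ?_⟩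
  obtain ⟨hr₁, hr₂⟩ := mem_sdiff.mp (hR hr)
  rw [Nat.mem_primesLE] at hr₁ hr₂
  exact ⟨hr₁.2, not_le.mp fun h ↦ hr₂ ⟨h, hr₁.2⟩, hr₁.1⟩

lemma sum_log_le_log_four_mul {U : Finset ℕ} {n : ℕ} (hU : U ⊆ Nat.primesLE n) :
    ∑ p ∈ U, log (p : ℝ) ≤ log 4 * n := calc
  _ ≤ ∑ p ∈ Nat.primesLE n, log (p : ℝ) :=
    sum_le_sum_of_subset_of_nonneg hU fun p _ _ ↦ log_natCast_nonneg p
  _ = Chebyshev.theta n := (Chebyshev.theta_eq_sum_primesLE_log n).symm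
  _ ≤ log 4 * n := Chebyshev.theta_le_log4_mul_x (Nat.cast_nonneg n)

lemma sum_log_le_card_mul_log {R : Finset ℕ} {N : ℕ} (hR : ∀ r ∈ R, 0 < r ∧ r ≤ N) :
    ∑ r ∈ R, log (r : ℝ) ≤ #R * log N := by
  rw [← nsmul_eq_mul]
  exact sum_le_card_nsmul _ _ _ fun r hr ↦
    log_le_log (by exact_mod_cast (hR r hr).1) (by exact_mod_cast (hR r hr).2)

lemma exists_covering {K y : ℕ} {G : Finset ℕ} (hG : ∀ p ∈ G, p.Prime ∧ K < p)
    (hGy : ∀ p ∈ G, p ≤ y) (hK : 0 < K) (hKy : K * K ≤ y) (hπ : 2 * y ≤ π (y ^ 2)) :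
    ∃ U : Finset ℕ, ∃ a : ℕ → ℕ, (∀ p ∈ U, p.Prime) ∧ survivors U a (Icc 1 y) = ∅ ∧
      ∑ p ∈ U, log (p : ℝ) ≤ log 4 * (y / K : ℕ) + ∑ p ∈ G, log (p : ℝ) +
        (∏ p ∈ G, (1 - 1 / (p : ℝ))) *
          (π y + 2 ^ #(G.sup id + 1).primesBelow * y.sqrt) * (2 * log y) := by
  set U₁ := Nat.primesLE (y / K) \ G
  set S₁ := survivors U₁ 0 (Icc 1 y)
  obtain ⟨c, hc⟩ := exists_card_survivors_le G (fun p hp ↦ (hG p hp).1.pos) S₁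
  set S₂ := survivors G c S₁
  have hS₂ : S₂ ⊆ Icc 1 y := (filter_subset _ _).trans (filter_subset _ _)
  obtain ⟨R, hRcard, hR⟩ := exists_primes_between_card_eq
    ((card_le_card hS₂).trans (by simp)) hπ
  obtain ⟨b, hb⟩ := exists_survivors_eq_empty (fun s hs r hr ↦
    ((mem_Icc.mp (hS₂ hs)).2.trans (hR r hr).2.1.le)) hRcard.symm
  have hU₁ : ∀ p ∈ U₁, p.Prime ∧ p ≤ y := fun p hp ↦ by
    obtain ⟨hp, -⟩ := mem_sdiff.mp hp
    rw [Nat.mem_primesLE] at hp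
    exact ⟨hp.2, hp.1.trans (Nat.div_le_self y K)⟩
  have hGR : Disjoint G R := disjoint_left.mpr fun p hpG hpR ↦
    absurd (hGy p hpG) (not_le.mpr (hR p hpR).2.1)
  have hU₁GR : Disjoint U₁ (G ∪ R) := disjoint_union_right.mpr ⟨sdiff_disjoint,
    disjoint_left.mpr fun p hpU hpR ↦ absurd (hU₁ p hpU).2 (not_le.mpr (hR p hpR).2.1)⟩
  refine ⟨U₁ ∪ (G ∪ R), U₁.piecewise 0 (G.piecewise c b), fun p hp ↦ ?_, ?_, ?_⟩
  · rcases mem_union.mp hp with hp | hp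
    · exact (hU₁ p hp).1
    rcases mem_union.mp hp with hp | hp
    · exact (hG p hp).1
    · exact (hR p hp).1
  · rw [survivors_union hU₁GR, survivors_union hGR]
    exact hb
  have hU₁log := sum_log_le_log_four_mul (sdiff_subset : U₁ ⊆ Nat.primesLE (y / K))
  have hRlog : ∑ p ∈ R, log (p : ℝ) ≤ #S₂ * (2 * log y) := by
    rw [← hRcard, ← Nat.cast_ofNat, ← log_pow, ← Nat.cast_pow]
    exact sum_log_le_card_mul_log fun r hr ↦ ⟨(hR r hr).1.pos, (hR r hr).2.2⟩
  have hS₂card : (#S₂ : ℝ) ≤ (∏ p ∈ G, (1 - 1 / (p : ℝ))) *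
      (π y + 2 ^ #(G.sup id + 1).primesBelow * y.sqrt) := by
    refine hc.trans (mul_le_mul_of_nonneg_left ?_
      (prod_nonneg fun p hp ↦ one_sub_one_div_natCast_nonneg (hG p hp).1.pos))
    exact_mod_cast card_survivors_primesLE_sdiff_le (fun p hp ↦ (hG p hp).2) hK hKy
  have := mul_le_mul_of_nonneg_right hS₂card
    (mul_nonneg zero_le_two (log_natCast_nonneg y))
  rw [sum_union hU₁GR, sum_union hGR]
  linarith

theorem eventually_exists_covering {ε : ℝ} (hε : 0 < ε) :
    ∀ᶠ y : ℕ in atTop, ∃ U : Finset ℕ, ∃ a : ℕ → ℕ, (∀ p ∈ U, p.Prime) ∧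
      survivors U a (Icc 1 y) = ∅ ∧ ∑ p ∈ U, log (p : ℝ) ≤ ε * y := by
  obtain ⟨K, hK⟩ := exists_nat_gt (3 * log 4 / ε)
  have hK0 : 0 < K := by
    have : (0 : ℝ) < K := (by positivity : (0 : ℝ) < 3 * log 4 / ε).trans hK
    exact_mod_cast this
  obtain ⟨G, hG, hρ⟩ := exists_primes_gt_prod_one_sub_one_div_le K (δ := ε / 24) (by positivity)
  filter_upwards [eventually_primeCounting_mul_log_le,
    eventually_const_mul_sqrt_mul_log_le (2 ^ #(G.sup id + 1).primesBelow),
    eventually_two_mul_le_primeCounting_sq,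
    tendsto_natCast_atTop_atTop.eventually
      (eventually_ge_atTop (3 / ε * ∑ p ∈ G, log (p : ℝ))),
    eventually_ge_atTop (K * K), eventually_ge_atTop (G.sup id)]
    with y hπy hsmooth hπ hGlog hKy hGy
  obtain ⟨U, a, hU, hcover, hlog⟩ :=
    exists_covering hG (fun p hp ↦ (le_sup (f := id) hp).trans hGy) hK0 hKy hπ
  refine ⟨U, a, hU, hcover, hlog.trans ?_⟩
  -- each of the three costs is at most `ε y / 3`
  have h₁ : log 4 * (y / K : ℕ) ≤ ε / 3 * y := by
    have hK' : 3 * log 4 < K * ε := (div_lt_iff₀ hε).mp hK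
    calc log 4 * ((y / K : ℕ) : ℝ) ≤ log 4 * (y / K) := by gcongr; exact Nat.cast_div_le
      _ = log 4 / K * y := by ring
      _ ≤ ε / 3 * y := by
        refine mul_le_mul_of_nonneg_right ?_ (Nat.cast_nonneg y)
        rw [div_le_iff₀ (by exact_mod_cast hK0)]
        linarith
  have h₂ : ∑ p ∈ G, log (p : ℝ) ≤ ε / 3 * y := by
    rw [div_mul_eq_mul_div, le_div_iff₀ (by norm_num)]
    rw [div_mul_eq_mul_div, div_le_iff₀ hε] at hGlog
    linarith
  have h₃ : (π y + 2 ^ #(G.sup id + 1).primesBelow * y.sqrt : ℝ) * (2 * log y) ≤ 8 * y := by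
    have := Real.nat_sqrt_le_real_sqrt (a := y)
    calc (π y + 2 ^ #(G.sup id + 1).primesBelow * y.sqrt : ℝ) * (2 * log y)
        ≤ (π y + 2 ^ #(G.sup id + 1).primesBelow * √y) * (2 * log y) := by
          gcongr
      _ = 2 * (π y * log y + 2 ^ #(G.sup id + 1).primesBelow * √y * log y) := by ring
      _ ≤ 8 * y := by linarith
  have hρ0 : 0 ≤ ∏ p ∈ G, (1 - 1 / (p : ℝ)) :=
    prod_nonneg fun p hp ↦ one_sub_one_div_natCast_nonneg (hG p hp).1.pos
  have := mul_le_mul hρ h₃ (by positivity) (by positivity)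
  rw [← mul_assoc] at this
  linarith

lemma exists_modEq_mem_Ico {U : Finset ℕ} (hU : ∀ p ∈ U, p.Prime) (a : ℕ → ℕ) (L : ℕ) :
    ∃ m ∈ Ico (L * ∏ p ∈ U, p) ((L + 1) * ∏ p ∈ U, p), ∀ p ∈ U, m ≡ a p [MOD p] := by
  have hU0 : ∀ p ∈ U, id p ≠ 0 := fun p hp ↦ (hU p hp).ne_zero
  have hcop : Set.Pairwise U (Function.onFun Nat.Coprime id) := fun p hp q hq hpq ↦
    (Nat.coprime_primes (hU p hp) (hU q hq)).mpr hpq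
  set k := Nat.chineseRemainderOfFinset a id U hU0 hcop
  have hk : (k : ℕ) < ∏ p ∈ U, p := Nat.chineseRemainderOfFinset_lt_prod a id hU0 hcop
  refine ⟨k + L * ∏ p ∈ U, p, mem_Ico.mpr ⟨le_add_self, by rw [add_one_mul, add_comm]; omega⟩,
    fun p hp ↦ ?_⟩
  simpa using (k.2 p hp).add (Nat.modEq_zero_iff_dvd.mpr
    (dvd_mul_of_dvd_right (dvd_prod_of_mem id hp) L))

lemma not_prime_add_of_survivors_eq_empty {U : Finset ℕ} {a : ℕ → ℕ} {y m : ℕ}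
    (hU : ∀ p ∈ U, p.Prime) (hcover : survivors U a (Icc 1 y) = ∅)
    (hm : ∀ p ∈ U, m ≡ a p [MOD p]) (hPm : ∏ p ∈ U, p ≤ m) :
    ∀ s ∈ Icc 1 y, ¬ (m + s).Prime := by
  intro s hs
  obtain ⟨p, hpU, hdvd⟩ : ∃ p ∈ U, p ∣ a p + s := by
    by_contra! h
    have : s ∈ survivors U a (Icc 1 y) := mem_filter.mpr ⟨hs, h⟩
    simp [hcover] at this
  have hpm : p ∣ m + s :=
    Nat.modEq_zero_iff_dvd.mp (((hm p hpU).add_right s).trans (Nat.modEq_zero_iff_dvd.mpr hdvd))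
  have hp : p ≤ m := (Nat.le_of_dvd (prod_pos fun q hq ↦ (hU q hq).pos)
    (dvd_prod_of_mem id hpU)).trans hPm
  exact Nat.not_prime_of_dvd_of_lt hpm (hU p hpU).two_le
    (by have := (mem_Icc.mp hs).1; omega)

lemma exists_composite_run {C : ℝ} (hC : 0 < C) (L : ℕ) :
    ∃ m y : ℕ, L ≤ m ∧ C * log m < y ∧ ∀ s ∈ Icc 1 y, ¬ (m + s).Prime := by
  obtain ⟨y, ⟨U, a, hU, hcover, hlog⟩, hy⟩ :=
    ((eventually_exists_covering (ε := 1 / (2 * C)) (by positivity)).and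
      (tendsto_natCast_atTop_atTop.eventually
        (eventually_gt_atTop (2 * C * log (L + 2))))).exists
  obtain ⟨m, hmI, hm⟩ := exists_modEq_mem_Ico hU a (L + 1)
  set P := ∏ p ∈ U, p
  have hP : 0 < P := prod_pos fun p hp ↦ (hU p hp).pos
  obtain ⟨hmL, hmP⟩ := mem_Ico.mp hmI
  have hPm : P ≤ m := le_trans (Nat.le_mul_of_pos_left P L.succ_pos) hmL
  refine ⟨m, y, le_trans (by nlinarith) hmL, ?_,
    not_prime_add_of_survivors_eq_empty hU hcover hm hPm⟩
  have hmP' : (m : ℝ) ≤ (L + 2) * P := by exact_mod_cast hmP.le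
  have hlogm : log m ≤ log (L + 2) + ∑ p ∈ U, log (p : ℝ) := calc
    log (m : ℝ) ≤ log ((L + 2) * P) := log_le_log (by exact_mod_cast hP.trans_le hPm) hmP'
    _ = log (L + 2) + ∑ p ∈ U, log (p : ℝ) := by
      rw [log_mul (by positivity) (by exact_mod_cast hP.ne'), Nat.cast_prod,
        log_prod fun p hp ↦ by exact_mod_cast (hU p hp).ne_zero]
  have : C * (1 / (2 * C) * y) = y / 2 := by field_simp
  nlinarith [mul_le_mul_of_nonneg_left hlogm hC.le, mul_le_mul_of_nonneg_left hlog hC.le]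

end Westzynthius

/-- **Westzynthius.** For every `C > 0` there are infinitely many `n` with
`p_{n+1} − p_n > C · log p_n`. -/
theorem prime_gaps_exceed_any_multiple_of_log :
    ∀ C : ℝ, 0 < C →
      ∃ᶠ n : ℕ in Filter.atTop,
        C * Real.log (Nat.nth Nat.Prime n) <
          (Nat.nth Nat.Prime (n + 1) : ℝ) - (Nat.nth Nat.Prime n : ℝ) := by
  intro C hC
  refine frequently_atTop.mpr fun N ↦ ?_
  obtain ⟨m, y, hNm, hlog, hrun⟩ :=
    Westzynthius.exists_composite_run hC (Nat.nth Nat.Prime N)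
  obtain ⟨n, hnm, hmn⟩ := Westzynthius.exists_nth_prime_le_lt_of_not_prime
    ((Nat.prime_nth_prime N).two_le.trans hNm) hrun
  refine ⟨n, Nat.lt_add_one_iff.mp ?_, ?_⟩
  · have : Nat.nth Nat.Prime N < Nat.nth Nat.Prime (n + 1) := by omega
    exact (Nat.nth_strictMono Nat.infinite_setOfPred_prime).lt_iff_lt.mp this
  · have hp : log (Nat.nth Nat.Prime n : ℝ) ≤ log m :=
      log_le_log (by exact_mod_cast (Nat.prime_nth_prime n).pos) (by exact_mod_cast hnm)
    have hgap : (m + y : ℝ) < Nat.nth Nat.Prime (n + 1) := by exact_mod_cast hmn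
    have hpm : (Nat.nth Nat.Prime n : ℝ) ≤ m := by exact_mod_cast hnm
    linarith [mul_le_mul_of_nonneg_left hp hC.le]
end

section
/- Let k ≥ 2 be an integer and let G : ℝ → [0,∞) be a measurable function supported on [0,∞) with ∫_0^∞ G(t)^2 dt = 1. Then ∫_{t ∈ [0,∞)^{k−1}, t_1+⋯+t_{k−1} ≤ 1} ( ∏_{i=1}^{k−1} G(t_i) )^2 · ( ∫_0^{1−(t_1+⋯+t_{k−1})} G(u) du )^2 dt_1⋯dt_{k−1} ≥ ( ∫_0^{1/2} G(u) du )^2 · ∫_{t ∈ [0,∞)^k, t_1+⋯+t_k ≤ 1/2} ∏_{i=1}^{k} G(t_i)^2 dt_1⋯dt_k. -/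
/-!
With `f = G²`, a probability density, integrating out one coordinate against `f` shows that the
mass of `∏ f(tᵢ)` on the simplex `∑ tᵢ ≤ a` does not decrease when a coordinate is dropped; in
particular it is at most `1`. So the `k`-dimensional integral over `∑ tᵢ ≤ 1/2` is at most the
`(k-1)`-dimensional one, on which `1 - ∑ tᵢ ≥ 1/2` and hence `(∫_0^{1 - ∑ tᵢ} G)² ≥ (∫_0^{1/2} G)²`
since `G ≥ 0`; enlarging the simplex to `∑ tᵢ ≤ 1` finishes. The argument runs with lower
Lebesgue integrals, and the bound by `1` makes the right-hand side finite, so that it transfers to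
Bochner integrals.
-/

open MeasureTheory Set
open scoped ENNReal

def simplexBelow (m : ℕ) (a : ℝ) : Set (Fin m → ℝ) := {t | (∀ i, 0 ≤ t i) ∧ ∑ i, t i ≤ a}

theorem measurableSet_simplexBelow (m : ℕ) (a : ℝ) : MeasurableSet (simplexBelow m a) := by
  refine .inter (?_ : MeasurableSet {t : Fin m → ℝ | ∀ i, 0 ≤ t i})
    (measurableSet_le (Finset.measurable_sum _ fun i _ => measurable_pi_apply i) measurable_const)
  rw [Set.ofPred_forall]
  exact .iInter fun i => measurableSet_le measurable_const (measurable_pi_apply i)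

theorem simplexBelow_mono (m : ℕ) {a b : ℝ} (hab : a ≤ b) : simplexBelow m a ⊆ simplexBelow m b :=
  fun _ ht => ⟨ht.1, ht.2.trans hab⟩

theorem mem_simplexBelow_of_cons_mem {m : ℕ} {a x : ℝ} {y : Fin m → ℝ}
    (h : Fin.cons x y ∈ simplexBelow (m + 1) a) : y ∈ simplexBelow m a := by
  obtain ⟨hpos, hsum⟩ := h
  refine ⟨fun j => by simpa using hpos j.succ, ?_⟩
  rw [Fin.sum_cons] at hsum
  linarith [show 0 ≤ x by simpa using hpos 0]

section ProductDensity

variable {μ : Measure ℝ} [SigmaFinite μ] {f : ℝ → ℝ≥0∞}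

theorem setLIntegral_simplexBelow_succ_le (hf : Measurable f) (hf1 : ∫⁻ x, f x ∂μ ≤ 1)
    (m : ℕ) (a : ℝ) :
    ∫⁻ t in simplexBelow (m + 1) a, ∏ i, f (t i) ∂Measure.pi (fun _ => μ) ≤
      ∫⁻ t in simplexBelow m a, ∏ i, f (t i) ∂Measure.pi (fun _ => μ) := by
  let F : ∀ n, (Fin n → ℝ) → ℝ≥0∞ := fun n => (simplexBelow n a).indicator fun t => ∏ i, f (t i)
  have hF : ∀ n, Measurable (F n) := fun n =>
    (Finset.measurable_prod _ fun i _ => hf.comp (measurable_pi_apply i)).indicator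
      (measurableSet_simplexBelow n a)
  have hcons : ∀ x y, F (m + 1) (Fin.cons x y) ≤ f x * F m y := by
    intro x y
    by_cases h : Fin.cons x y ∈ simplexBelow (m + 1) a
    · simp [F, indicator_of_mem h, indicator_of_mem (mem_simplexBelow_of_cons_mem h),
        Fin.prod_univ_succ]
    · simp [F, indicator_of_notMem h]
  have e := (measurePreserving_piFinSuccAbove (fun _ : Fin (m + 1) => μ) 0).symm
  rw [← lintegral_indicator (measurableSet_simplexBelow _ _),
    ← lintegral_indicator (measurableSet_simplexBelow _ _),
    ← e.lintegral_comp_emb (MeasurableEquiv.measurableEmbedding _),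
    lintegral_prod_symm _ ?meas]
  case meas => exact ((hF _).comp (MeasurableEquiv.measurable _)).aemeasurable
  simp only [MeasurableEquiv.piFinSuccAbove_symm_apply, Fin.insertNthEquiv, Equiv.coe_fn_mk,
    Fin.insertNth_zero']
  calc ∫⁻ y, ∫⁻ x, F (m + 1) (Fin.cons x y) ∂μ ∂Measure.pi (fun _ => μ)
      ≤ ∫⁻ y, ∫⁻ x, f x * F m y ∂μ ∂Measure.pi (fun _ => μ) :=
        lintegral_mono fun y => lintegral_mono fun x => hcons x y
    _ = ∫⁻ y, (∫⁻ x, f x ∂μ) * F m y ∂Measure.pi (fun _ => μ) := by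
        simp_rw [lintegral_mul_const _ hf]
    _ ≤ ∫⁻ y, F m y ∂Measure.pi (fun _ => μ) :=
        lintegral_mono fun y => mul_le_of_le_one_left zero_le hf1

theorem setLIntegral_simplexBelow_le_pred (hf : Measurable f) (hf1 : ∫⁻ x, f x ∂μ ≤ 1)
    (k : ℕ) (a : ℝ) :
    ∫⁻ t in simplexBelow k a, ∏ i, f (t i) ∂Measure.pi (fun _ => μ) ≤
      ∫⁻ t in simplexBelow (k - 1) a, ∏ i, f (t i) ∂Measure.pi (fun _ => μ) := by
  cases k with
  | zero => exact le_rfl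
  | succ m => exact setLIntegral_simplexBelow_succ_le hf hf1 m a

theorem setLIntegral_simplexBelow_le_one (hf : Measurable f) (hf1 : ∫⁻ x, f x ∂μ ≤ 1)
    (m : ℕ) (a : ℝ) :
    ∫⁻ t in simplexBelow m a, ∏ i, f (t i) ∂Measure.pi (fun _ => μ) ≤ 1 := by
  induction m with
  | zero =>
    simp only [Finset.univ_eq_empty, Finset.prod_empty, setLIntegral_one,
      Measure.pi_of_empty (fun _ : Fin 0 => μ)]
    exact prob_le_one
  | succ m ih => exact (setLIntegral_simplexBelow_succ_le hf hf1 m a).trans ih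

variable {ψ : ℝ → ℝ≥0∞}

theorem mul_setLIntegral_simplexBelow_le (hf : Measurable f) (hf1 : ∫⁻ x, f x ∂μ ≤ 1)
    (hψ : MonotoneOn ψ (Icc (1 / 2) 1)) (k : ℕ) :
    ψ (1 / 2) * ∫⁻ t in simplexBelow k (1 / 2), ∏ i, f (t i) ∂Measure.pi (fun _ => μ) ≤
      ∫⁻ t in simplexBelow (k - 1) 1, (∏ i, f (t i)) * ψ (1 - ∑ i, t i)
        ∂Measure.pi (fun _ => μ) := by
  have hprod : Measurable fun t : Fin (k - 1) → ℝ => ∏ i, f (t i) :=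
    Finset.measurable_prod _ fun i _ => hf.comp (measurable_pi_apply i)
  calc ψ (1 / 2) * ∫⁻ t in simplexBelow k (1 / 2), ∏ i, f (t i) ∂Measure.pi (fun _ => μ)
      ≤ ψ (1 / 2) * ∫⁻ t in simplexBelow (k - 1) (1 / 2), ∏ i, f (t i)
          ∂Measure.pi (fun _ => μ) := by
        gcongr
        exact setLIntegral_simplexBelow_le_pred hf hf1 k _
    _ = ∫⁻ t in simplexBelow (k - 1) (1 / 2), ψ (1 / 2) * ∏ i, f (t i)
          ∂Measure.pi (fun _ => μ) := (lintegral_const_mul _ hprod).symm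
    _ ≤ ∫⁻ t in simplexBelow (k - 1) (1 / 2), (∏ i, f (t i)) * ψ (1 - ∑ i, t i)
          ∂Measure.pi (fun _ => μ) := by
        refine setLIntegral_mono' (measurableSet_simplexBelow _ _) fun t ht => ?_
        have hsum : 0 ≤ ∑ i, t i := Finset.sum_nonneg fun i _ => ht.1 i
        rw [mul_comm]
        gcongr
        exact hψ ⟨le_rfl, by norm_num⟩ ⟨by linarith [ht.2], by linarith⟩ (by linarith [ht.2])
    _ ≤ _ := lintegral_mono_set (simplexBelow_mono _ (by norm_num))

theorem setLIntegral_simplexBelow_mul_le (hf : Measurable f) (hf1 : ∫⁻ x, f x ∂μ ≤ 1)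
    {b : ℝ} (hψ : MonotoneOn ψ (Icc 0 b)) (m : ℕ) :
    ∫⁻ t in simplexBelow m b, (∏ i, f (t i)) * ψ (b - ∑ i, t i) ∂Measure.pi (fun _ => μ) ≤
      ψ b := by
  have hprod : Measurable fun t : Fin m → ℝ => ∏ i, f (t i) :=
    Finset.measurable_prod _ fun i _ => hf.comp (measurable_pi_apply i)
  calc ∫⁻ t in simplexBelow m b, (∏ i, f (t i)) * ψ (b - ∑ i, t i) ∂Measure.pi (fun _ => μ)
      ≤ ∫⁻ t in simplexBelow m b, (∏ i, f (t i)) * ψ b ∂Measure.pi (fun _ => μ) := by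
        refine setLIntegral_mono' (measurableSet_simplexBelow _ _) fun t ht => ?_
        have hsum : 0 ≤ ∑ i, t i := Finset.sum_nonneg fun i _ => ht.1 i
        have hb : 0 ≤ b := hsum.trans ht.2
        gcongr
        exact hψ ⟨by linarith [ht.2], by linarith⟩ ⟨hb, le_rfl⟩ (by linarith)
    _ = (∫⁻ t in simplexBelow m b, ∏ i, f (t i) ∂Measure.pi (fun _ => μ)) * ψ b :=
        lintegral_mul_const _ hprod
    _ ≤ ψ b := mul_le_of_le_one_left zero_le (setLIntegral_simplexBelow_le_one hf hf1 m b)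

end ProductDensity

theorem lintegral_ofReal_sq_eq_one {G : ℝ → ℝ} (hGsupp : ∀ t : ℝ, t < 0 → G t = 0)
    (hGnorm : ∫ t in Ioi (0 : ℝ), G t ^ 2 = 1) :
    ∫⁻ x, ENNReal.ofReal (G x ^ 2) = 1 := by
  have hsupp : Function.support (fun x => ENNReal.ofReal (G x ^ 2)) ⊆ Ici 0 := by
    intro x hx
    by_contra hneg
    simp [hGsupp x (not_le.1 hneg)] at hx
  rw [← setLIntegral_eq_of_support_subset hsupp, ← setLIntegral_congr Ioi_ae_eq_Ici,
    ← ofReal_integral_eq_lintegral_ofReal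
      (Integrable.of_integral_ne_zero (by rw [hGnorm]; exact one_ne_zero))
      (ae_of_all _ fun t => sq_nonneg (G t)), hGnorm, ENNReal.ofReal_one]

theorem monotoneOn_sq_intervalIntegral {G : ℝ → ℝ} (hG0 : ∀ t, 0 ≤ G t)
    (hG : LocallyIntegrable G) :
    MonotoneOn (fun s => (∫ u in (0 : ℝ)..s, G u) ^ 2) (Ici 0) := by
  intro s hs s' _ hss'
  have hint : IntervalIntegrable G volume 0 s' :=
    (hG.integrableOn_isCompact isCompact_uIcc).intervalIntegrable
  exact pow_le_pow_left₀ (intervalIntegral.integral_nonneg hs fun u _ => hG0 u)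
    (intervalIntegral.integral_mono_interval le_rfl hs hss' (ae_of_all _ hG0) hint) 2

theorem ENNReal.ofReal_prod_sq {ι : Type*} [Fintype ι] (g : ι → ℝ) :
    ENNReal.ofReal ((∏ i, g i) ^ 2) = ∏ i, ENNReal.ofReal (g i ^ 2) := by
  rw [← Finset.prod_pow, ENNReal.ofReal_prod_of_nonneg fun i _ => sq_nonneg _]

theorem J_lower_bound_general (k : ℕ) (G : ℝ → ℝ)
    (hG : Measurable G) (hGnonneg : ∀ t, 0 ≤ G t)
    (hGsupp : ∀ t : ℝ, t < 0 → G t = 0)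
    (hGnorm : ∫ t in Set.Ioi (0 : ℝ), G t ^ 2 = 1) :
    (∫ u in (0 : ℝ)..(1 / 2 : ℝ), G u) ^ 2 *
        ∫ t in {t : Fin k → ℝ | (∀ i, 0 ≤ t i) ∧ ∑ i, t i ≤ 1 / 2}, ∏ i, G (t i) ^ 2 ≤
      ∫ t in {t : Fin (k - 1) → ℝ | (∀ i, 0 ≤ t i) ∧ ∑ i, t i ≤ 1},
        (∏ i, G (t i)) ^ 2 * (∫ u in (0 : ℝ)..(1 - ∑ i, t i), G u) ^ 2 := by
  have hf : Measurable fun x => ENNReal.ofReal (G x ^ 2) := by fun_prop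
  have hf1 := lintegral_ofReal_sq_eq_one hGsupp hGnorm
  have hGsq : Integrable fun t => G t ^ 2 :=
    (lintegral_ofReal_ne_top_iff_integrable (by fun_prop) (ae_of_all _ fun t => sq_nonneg _)).1
      (by simp [hf1])
  have hGloc : LocallyIntegrable G :=
    ((memLp_two_iff_integrable_sq hG.aestronglyMeasurable).2 hGsq).locallyIntegrable one_le_two
  have hprimitive : Continuous fun s => ∫ u in (0 : ℝ)..s, G u :=
    intervalIntegral.continuous_primitive
      (fun a b => (hGloc.integrableOn_isCompact isCompact_uIcc).intervalIntegrable) 0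
  have hψ := ENNReal.ofReal_mono.comp_monotoneOn (monotoneOn_sq_intervalIntegral hGnonneg hGloc)
  have hlow := mul_setLIntegral_simplexBelow_le (μ := volume) hf hf1.le
    (hψ.mono ((Icc_subset_Ici_iff (by norm_num)).2 (by norm_num))) k
  have hfin := ((setLIntegral_simplexBelow_mul_le (μ := volume) (b := 1) hf hf1.le
    (hψ.mono Icc_subset_Ici_self) (k - 1)).trans_lt ENNReal.ofReal_lt_top).ne
  change (∫ u in (0 : ℝ)..(1 / 2 : ℝ), G u) ^ 2 *
      ∫ t in simplexBelow k (1 / 2), ∏ i, G (t i) ^ 2 ≤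
    ∫ t in simplexBelow (k - 1) 1, (∏ i, G (t i)) ^ 2 * (∫ u in (0 : ℝ)..(1 - ∑ i, t i), G u) ^ 2
  rw [integral_eq_lintegral_of_nonneg_ae (ae_of_all _ fun t => by positivity)
      (by fun_prop : Measurable _).aestronglyMeasurable,
    integral_eq_lintegral_of_nonneg_ae (ae_of_all _ fun t => by positivity)
      (by fun_prop : Measurable _).aestronglyMeasurable,
    ← ENNReal.toReal_ofReal (sq_nonneg (∫ u in (0 : ℝ)..(1 / 2 : ℝ), G u)), ← ENNReal.toReal_mul]
  simp only [ENNReal.ofReal_mul (sq_nonneg _), ENNReal.ofReal_prod_sq,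
    ENNReal.ofReal_prod_of_nonneg fun i _ => sq_nonneg (G _)]
  exact ENNReal.toReal_mono hfin hlow

/-- The concentration inequality `∑_ℓ J_ℓ ≥ (∫_0^{1/2} G)² · P(∑ Zᵢ < 1/2)` (one term):
for `k ≥ 2` and a measurable `G : ℝ → [0,∞)` supported on `[0,∞)` with
`∫_0^∞ G² = 1`, the `(k−1)`-dimensional integral of `(∏ G(tᵢ))² (∫_0^{1−∑tᵢ} G)²`
over the simplex `∑ tᵢ ≤ 1` is at least
`(∫_0^{1/2} G)²` times the `k`-dimensional integral of `∏ G(tᵢ)²` over `∑ tᵢ ≤ 1/2`. -/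
theorem J_lower_bound (k : ℕ) (hk : 2 ≤ k) (G : ℝ → ℝ)
    (hG : Measurable G) (hGnonneg : ∀ t, 0 ≤ G t)
    (hGsupp : ∀ t : ℝ, t < 0 → G t = 0)
    (hGnorm : ∫ t in Set.Ioi (0 : ℝ), G t ^ 2 = 1) :
    (∫ u in (0 : ℝ)..(1 / 2 : ℝ), G u) ^ 2 *
        ∫ t in {t : Fin k → ℝ | (∀ i, 0 ≤ t i) ∧ ∑ i, t i ≤ 1 / 2}, ∏ i, G (t i) ^ 2 ≤
      ∫ t in {t : Fin (k - 1) → ℝ | (∀ i, 0 ≤ t i) ∧ ∑ i, t i ≤ 1},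
        (∏ i, G (t i)) ^ 2 * (∫ u in (0 : ℝ)..(1 - ∑ i, t i), G u) ^ 2 :=
  J_lower_bound_general k G hG hGnonneg hGsupp hGnorm
end
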